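/- Let n₁ > n₂ ≥ 1 be natural numbers and n = n₁ + n₂. Then c(n₁) + c(n₂) + (n₁ − n₂) = c(n) if and only if one of the following three conditions holds: (i) there exist k ≥ 0 and p ≥ 1 such that n₁ = 2^k(p+1) and n₂ = 2^k p; (ii) there exist k ≥ 0, l ≥ 2, p ≥ 1, and 0 ≤ t < 2^{l−2} such that n₁ = 2^k(2^l(p+1) − (2t+1)) and n₂ = 2^{k+l} p; (iii) there exist k ≥ 0, l ≥ 2, p ≥ 1, and 0 ≤ t < 2^{l−2} such that n₁ = 2^{k+l}(p+1) and n₂ = 2^k(2^l p + 2t + 1). -/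

import Mathlib

/-- The Colless index of the maximally balanced bifurcating tree with `n` leaves:
`c 1 = 0` and `c n = c ⌈n/2⌉ + c ⌊n/2⌋ + (⌈n/2⌉ - ⌊n/2⌋)` for `n ≥ 2`. -/
def c : ℕ → ℕ
  | 0 => 0
  | 1 => 0
  | n + 2 => c ((n + 3) / 2) + c ((n + 2) / 2) + ((n + 3) / 2 - (n + 2) / 2)
decreasing_by all_goals omega

lemma c_zero : c 0 = 0 := by rw [c]
lemma c_one : c 1 = 0 := by rw [c]

lemma c_even (m : ℕ) : c (2 * m) = 2 * c m := by
  match m with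
  | 0 => simp [c]
  | 1 => show c 2 = 2 * c 1; rw [show (2:ℕ) = 0 + 2 from rfl, c]; norm_num [c]
  | n + 2 =>
    show c (2*n + 2 + 2) = _
    rw [c]
    have h1 : (2*n + 2 + 3) / 2 = n + 2 := by omega
    have h2 : (2*n + 2 + 2) / 2 = n + 2 := by omega
    rw [h1, h2]
    omega

lemma c_odd (m : ℕ) (hm : 1 ≤ m) : c (2 * m + 1) = c (m + 1) + c m + 1 := by
  match m with
  | n + 1 =>
    show c (2*n + 1 + 2) = _
    rw [c]
    have h1 : (2*n + 1 + 3) / 2 = n + 2 := by omega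
    have h2 : (2*n + 1 + 2) / 2 = n + 1 := by omega
    rw [h1, h2, show n + 1 + 1 = n + 2 from rfl]
    omega

lemma c_succ : ∀ x : ℕ, 1 ≤ x → c (x + 1) + 1 ≤ c x + x := by
  intro x
  induction x using Nat.strong_induction_on with
  | _ x IH =>
    intro hx
    rcases Nat.even_or_odd x with ⟨m, hm⟩ | ⟨m, hm⟩
    · have hm2 : x = 2 * m := by omega
      subst hm2
      have hm1 : 1 ≤ m := by omega
      have h1 : c (2*m + 1) = c (m+1) + c m + 1 := c_odd m hm1
      have h3 : c (m + 1) + 1 ≤ c m + m := IH m (by omega) hm1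
      have h2 : c (2*m) = 2 * c m := c_even m
      omega
    · subst hm
      rcases Nat.eq_or_lt_of_le (by omega : 1 ≤ m + 1) with h | h
      · have : m = 0 := by omega
        subst this
        have : c 2 = 2 * c 1 := c_even 1
        rw [c_one] at this
        simp [show (2:ℕ)*0+1 = 1 from rfl, c_one, show (2:ℕ)*0+1+1 = 2 from rfl, this]
      · have hm1 : 1 ≤ m := by omega
        have h1 : c (2*m + 1) = c (m+1) + c m + 1 := c_odd m hm1
        have h2 : c (2*m + 1 + 1) = 2 * c (m + 1) := by
          rw [show 2*m+1+1 = 2*(m+1) from by ring, c_even]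
        have h3 : c (m + 1) + 1 ≤ c m + m := IH m (by omega) hm1
        omega

lemma c_add_le : ∀ n x y : ℕ, x + y ≤ n → y ≤ x → c (x + y) ≤ c x + c y + (x - y) := by
  intro n
  induction n with
  | zero =>
    intro x y h hyx
    have hx : x = 0 := by omega
    have hy : y = 0 := by omega
    subst hx; subst hy; simp [c_zero]
  | succ n IH =>
    intro x y h hyx
    rcases Nat.eq_zero_or_pos y with rfl | hy
    · simp [c_zero]
    rcases Nat.eq_or_lt_of_le hy with h1 | hy2
    · -- y = 1
      have hy1 : y = 1 := h1.symm
      subst hy1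
      rcases Nat.eq_or_lt_of_le hyx with h2 | hx2
      · subst h2
        have : c 2 = 2 * c 1 := c_even 1
        rw [c_one] at this
        simp [show (1:ℕ)+1 = 2 from rfl, this, c_one]
      · have := c_succ x (by omega)
        rw [c_one]
        omega
    -- y ≥ 2
    rcases Nat.even_or_odd x with ⟨a, hax⟩ | ⟨a, hax⟩ <;>
      rcases Nat.even_or_odd y with ⟨b, hby⟩ | ⟨b, hby⟩
    · -- even even
      have hax2 : x = 2*a := by omega
      have hby2 : y = 2*b := by omega
      subst hax2; subst hby2
      have e1 : c (2*a) = 2 * c a := c_even a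
      have e2 : c (2*b) = 2 * c b := c_even b
      have e3 : c (2*a + 2*b) = 2 * c (a + b) := by
        rw [show 2*a+2*b = 2*(a+b) from by ring, c_even]
      have hI : c (a + b) ≤ c a + c b + (a - b) := IH a b (by omega) (by omega)
      omega
    · -- even odd
      have hax2 : x = 2*a := by omega
      subst hax2; subst hby
      have hb : 1 ≤ b := by omega
      have hba : b + 1 ≤ a := by omega
      have e1 : c (2*a) = 2 * c a := c_even a
      have e2 : c (2*b + 1) = c (b+1) + c b + 1 := c_odd b hb
      have e3 : c (2*a + (2*b+1)) = c (a+b+1) + c (a+b) + 1 := by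
        rw [show 2*a + (2*b+1) = 2*(a+b) + 1 from by ring, c_odd (a+b) (by omega),
          show a+b+1 = a + b + 1 from rfl]
      have hI1 : c (a + (b+1)) ≤ c a + c (b+1) + (a - (b+1)) := IH a (b+1) (by omega) hba
      have hI2 : c (a + b) ≤ c a + c b + (a - b) := IH a b (by omega) (by omega)
      rw [show a + (b+1) = a+b+1 from by ring] at hI1
      omega
    · -- odd even
      subst hax
      have hby2 : y = 2*b := by omega
      subst hby2
      have hb : 1 ≤ b := by omega
      have hba : b ≤ a := by omega
      have ha : 1 ≤ a := by omega
      have e1 : c (2*a + 1) = c (a+1) + c a + 1 := c_odd a ha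
      have e2 : c (2*b) = 2 * c b := c_even b
      have e3 : c (2*a + 1 + 2*b) = c (a+b+1) + c (a+b) + 1 := by
        rw [show 2*a + 1 + 2*b = 2*(a+b) + 1 from by ring, c_odd (a+b) (by omega),
          show a+b+1 = a + b + 1 from rfl]
      have hI1 : c ((a+1) + b) ≤ c (a+1) + c b + ((a+1) - b) := IH (a+1) b (by omega) (by omega)
      have hI2 : c (a + b) ≤ c a + c b + (a - b) := IH a b (by omega) hba
      rw [show (a+1) + b = a+b+1 from by ring] at hI1
      omega
    · -- odd odd
      subst hax; subst hby
      have hb : 1 ≤ b := by omega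
      have ha : 1 ≤ a := by omega
      have hba : b ≤ a := by omega
      have e1 : c (2*a + 1) = c (a+1) + c a + 1 := c_odd a ha
      have e2 : c (2*b + 1) = c (b+1) + c b + 1 := c_odd b hb
      have e3 : c (2*a + 1 + (2*b + 1)) = 2 * c (a+b+1) := by
        rw [show 2*a + 1 + (2*b+1) = 2*(a+b+1) from by ring, c_even]
      rcases Nat.eq_or_lt_of_le hba with h4 | h4
      · subst h4
        rw [show b + b + 1 = 2*b + 1 from by ring] at e3
        omega
      · have hI1 : c ((a+1) + b) ≤ c (a+1) + c b + ((a+1) - b) := IH (a+1) b (by omega) (by omega)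
        have hI2 : c (a + (b+1)) ≤ c a + c (b+1) + (a - (b+1)) := IH a (b+1) (by omega) (by omega)
        rw [show (a+1) + b = a+b+1 from by ring] at hI1
        rw [show a + (b+1) = a+b+1 from by ring] at hI2
        omega

def R (x y : ℕ) : Prop :=
  (∃ k p : ℕ, 1 ≤ p ∧ x = 2 ^ k * (p + 1) ∧ y = 2 ^ k * p) ∨
  (∃ k l p t : ℕ, 2 ≤ l ∧ 1 ≤ p ∧ t < 2 ^ (l - 2) ∧
     x = 2 ^ k * (2 ^ l * (p + 1) - (2 * t + 1)) ∧ y = 2 ^ (k + l) * p) ∨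
  (∃ k l p t : ℕ, 2 ≤ l ∧ 1 ≤ p ∧ t < 2 ^ (l - 2) ∧
     x = 2 ^ (k + l) * (p + 1) ∧ y = 2 ^ k * (2 ^ l * p + 2 * t + 1))

lemma p2pos (k : ℕ) : 0 < 2^k := Nat.pow_pos (by norm_num)

lemma pexp_lt {a b : ℕ} (h : (2:ℕ)^a < 2^b) : a < b :=
  (Nat.pow_lt_pow_iff_right (by norm_num)).mp h

lemma pexp_le {a b : ℕ} (h : a ≤ b) : (2:ℕ)^a ≤ 2^b :=
  Nat.pow_le_pow_right (by norm_num) h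

lemma phalf {a : ℕ} (h : 1 ≤ a) : (2:ℕ)^a = 2*2^(a-1) := by
  rw [← pow_succ']
  congr 1
  omega

-- facts about family (ii) expressions
lemma fam2_facts (k l p t : ℕ) (hl : 2 ≤ l) (ht : t < 2^(l-2)) :
    2^k*(2^l*(p+1) - (2*t+1)) + 2^k*(2*t+1) = 2^(k+l)*p + 2^(k+l) ∧
    0 < 2^k*(2*t+1) ∧ 2^k*(2*t+1) < 2^(k+l-1) ∧ 2^(k+l) = 2*2^(k+l-1) := by
  have h4 : (2:ℕ)^l = 2*2^(l-1) := phalf (by omega)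
  have h5 : (2:ℕ)^(l-1) = 2*2^(l-2) := by
    have := phalf (a := l-1) (by omega)
    rwa [show l-1-1 = l-2 from by omega] at this
  have hlt : 2*t+1 < 2^(l-1) := by omega
  have hle : (2:ℕ)^l ≤ 2^l*(p+1) := Nat.le_mul_of_pos_right _ (by omega)
  have e1 : (2:ℕ)^l*(p+1) = 2^l*p + 2^l := by ring
  constructor
  · rw [← Nat.mul_add, show (2^l*(p+1) - (2*t+1)) + (2*t+1) = 2^l*(p+1) from by omega,
      ← mul_assoc, ← pow_add]
    ring
  refine ⟨Nat.mul_pos (p2pos k) (by omega), ?_, ?_⟩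
  · calc 2^k*(2*t+1) < 2^k*2^(l-1) := (Nat.mul_lt_mul_left (p2pos k)).mpr hlt
    _ = 2^(k+l-1) := by rw [← pow_add]; congr 1; omega
  · have := phalf (a := k+l) (by omega)
    rwa [show k+l-1 = k+l-1 from rfl] at this

-- facts about family (iii) expressions
lemma fam3_facts (k l p t : ℕ) (hl : 2 ≤ l) (ht : t < 2^(l-2)) :
    2^k*(2^l*p + 2*t+1) = 2^(k+l)*p + 2^k*(2*t+1) ∧
    0 < 2^k*(2*t+1) ∧ 2^k*(2*t+1) < 2^(k+l-1) ∧ 2^(k+l) = 2*2^(k+l-1) := by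
  have h4 : (2:ℕ)^l = 2*2^(l-1) := phalf (by omega)
  have h5 : (2:ℕ)^(l-1) = 2*2^(l-2) := by
    have := phalf (a := l-1) (by omega)
    rwa [show l-1-1 = l-2 from by omega] at this
  have hlt : 2*t+1 < 2^(l-1) := by omega
  constructor
  · rw [show (2:ℕ)^l*p + 2*t+1 = 2^l*p + (2*t+1) from by ring, Nat.mul_add,
      ← mul_assoc, ← pow_add]
  refine ⟨Nat.mul_pos (p2pos k) (by omega), ?_, ?_⟩
  · calc 2^k*(2*t+1) < 2^k*2^(l-1) := (Nat.mul_lt_mul_left (p2pos k)).mpr hlt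
    _ = 2^(k+l-1) := by rw [← pow_add]; congr 1; omega
  · exact phalf (by omega)

lemma dvd_odd_part {k k₂ U b : ℕ} (hb : b = 2^k*U) (hU : U % 2 = 1) (hd : 2^k₂ ∣ b) :
    k₂ ≤ k := by
  by_contra hc
  push_neg at hc
  have h1 : (2:ℕ)^(k+1) ∣ b := dvd_trans (pow_dvd_pow 2 (by omega)) hd
  obtain ⟨q, hq⟩ := h1
  rw [pow_succ] at hq
  rw [hb] at hq
  have : U = 2*q := by
    have h2 : 2^k*U = 2^k*(2*q) := by rw [hq]; ring
    exact Nat.eq_of_mul_eq_mul_left (p2pos k) h2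
  omega

-- reparametrized constructors
lemma R_i' (k P : ℕ) (hP : 1 ≤ P) : R (2^k*P + 2^k) (2^k*P) :=
  Or.inl ⟨k, P, hP, by ring, rfl⟩

lemma R_ii' (k l P s : ℕ) (hl : 2 ≤ l) (hP : 1 ≤ P) (hs1 : 2^(l-1) < s) (hs2 : s < 2^l)
    (hodd : s % 2 = 1) : R (2^(k+l)*P + 2^k*s) (2^(k+l)*P) := by
  have h4 : (2:ℕ)^l = 2*2^(l-1) := phalf (by omega)
  have h5 : (2:ℕ)^(l-1) = 2*2^(l-2) := by
    have := phalf (a := l-1) (by omega)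
    rwa [show l-1-1 = l-2 from by omega] at this
  refine Or.inr (Or.inl ⟨k, l, P, (2^l - s - 1)/2, hl, hP, by omega, ?_, rfl⟩)
  have e0 : 2*((2^l - s - 1)/2) + 1 = 2^l - s := by omega
  rw [e0]
  have e1 : 2^l*(P+1) - (2^l - s) = 2^l*P + s := by
    have : (2:ℕ)^l*(P+1) = 2^l*P + 2^l := by ring
    omega
  rw [e1, Nat.mul_add, ← mul_assoc, ← pow_add]

lemma R_iii' (k l P r : ℕ) (hl : 2 ≤ l) (hP : 1 ≤ P) (hr : r < 2^(l-1))
    (hodd : r % 2 = 1) : R (2^(k+l)*(P+1)) (2^(k+l)*P + 2^k*r) := by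
  have h5 : (2:ℕ)^(l-1) = 2*2^(l-2) := by
    have := phalf (a := l-1) (by omega)
    rwa [show l-1-1 = l-2 from by omega] at this
  refine Or.inr (Or.inr ⟨k, l, P, (r-1)/2, hl, hP, by omega, rfl, ?_⟩)
  have e0 : (2:ℕ)^l*P + 2*((r-1)/2) + 1 = 2^l*P + r := by omega
  rw [e0, Nat.mul_add, ← mul_assoc, ← pow_add]

lemma R2 (a b : ℕ) : ¬ R (2*a+1) (2*b+1) := by
  rintro (⟨k, p, hp, hx, hy⟩ | ⟨k, l, p, t, hl, hp, ht, hx, hy⟩ |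
    ⟨k, l, p, t, hl, hp, ht, hx, hy⟩)
  · match k with
    | 0 => simp only [pow_zero, one_mul] at hx hy; omega
    | k+1 =>
      have e : 2^(k+1)*p = 2*(2^k*p) := by rw [pow_succ]; ring
      omega
  · have e : 2^(k+l)*p = 2*(2^(k+l-1)*p) := by
      rw [phalf (show 1 ≤ k+l from by omega)]; ring
    omega
  · have e : 2^(k+l)*(p+1) = 2*(2^(k+l-1)*(p+1)) := by
      rw [phalf (show 1 ≤ k+l from by omega)]; ring
    omega

lemma R3 (a : ℕ) (ha : 1 ≤ a) : R (2*a) 1 ↔ a = 1 := by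
  constructor
  · rintro (⟨k, p, hp, hx, hy⟩ | ⟨k, l, p, t, hl, hp, ht, hx, hy⟩ |
      ⟨k, l, p, t, hl, hp, ht, hx, hy⟩)
    · have h1 : (2:ℕ)^k ≤ 1 := Nat.le_of_dvd one_pos ⟨p, hy⟩
      have h2 : (1:ℕ) ≤ 2^k := p2pos k
      have h3 : (2:ℕ)^k = 1 := le_antisymm h1 h2
      rw [h3] at hx hy
      omega
    · have h1 : (4:ℕ) ≤ 2^(k+l) := by
        calc (4:ℕ) = 2^2 := rfl
        _ ≤ 2^(k+l) := pexp_le (by omega)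
      have h2 : (2:ℕ)^(k+l) ≤ 2^(k+l)*p := Nat.le_mul_of_pos_right _ hp
      omega
    · have h1 : (4:ℕ) ≤ 2^l := by
        calc (4:ℕ) = 2^2 := rfl
        _ ≤ 2^l := pexp_le (by omega)
      have h2 : (2:ℕ)^l ≤ 2^l*p := Nat.le_mul_of_pos_right _ hp
      have h3 : (1:ℕ) ≤ 2^k := p2pos k
      have h4 : 2^l*p + 2*t+1 ≤ 2^k*(2^l*p + 2*t+1) := Nat.le_mul_of_pos_left _ (by omega)
      omega
  · rintro rfl
    exact Or.inl ⟨0, 1, le_refl 1, by norm_num, by norm_num⟩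

lemma R1 (a b : ℕ) : R (2*a) (2*b) ↔ R a b := by
  constructor
  · rintro (⟨k, p, hp, hx, hy⟩ | ⟨k, l, p, t, hl, hp, ht, hx, hy⟩ |
      ⟨k, l, p, t, hl, hp, ht, hx, hy⟩)
    · match k with
      | 0 => simp only [pow_zero, one_mul] at hx hy; omega
      | k+1 =>
        have e1 : 2^(k+1)*(p+1) = 2*(2^k*(p+1)) := by rw [pow_succ]; ring
        have e2 : 2^(k+1)*p = 2*(2^k*p) := by rw [pow_succ]; ring
        exact Or.inl ⟨k, p, hp, by omega, by omega⟩
    · match k with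
      | 0 =>
        obtain ⟨key, hZ0, hZ1, hZ2⟩ := fam2_facts 0 l p t hl ht
        simp only [pow_zero, one_mul, Nat.zero_add] at key hZ0 hZ1 hZ2 hx
        have eY : 2^l*p = 2*(2^(l-1)*p) := by
          rw [phalf (show 1 ≤ l from by omega)]; ring
        omega
      | k+1 =>
        have e1 : 2^(k+1)*(2^l*(p+1) - (2*t+1)) = 2*(2^k*(2^l*(p+1) - (2*t+1))) := by
          rw [pow_succ]; ring
        have e2 : 2^(k+1+l)*p = 2*(2^(k+l)*p) := by
          have : (2:ℕ)^(k+1+l) = 2*2^(k+l) := by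
            have := phalf (a := k+1+l) (by omega)
            rwa [show k+1+l-1 = k+l from by omega] at this
          rw [this]; ring
        exact Or.inr (Or.inl ⟨k, l, p, t, hl, hp, ht, by omega, by omega⟩)
    · match k with
      | 0 =>
        obtain ⟨key, hZ0, hZ1, hZ2⟩ := fam3_facts 0 l p t hl ht
        simp only [pow_zero, one_mul, Nat.zero_add] at key hZ0 hZ1 hZ2 hy
        have eY : 2^l*p = 2*(2^(l-1)*p) := by
          rw [phalf (show 1 ≤ l from by omega)]; ring
        omega
      | k+1 =>
        have e1 : 2^(k+1+l)*(p+1) = 2*(2^(k+l)*(p+1)) := by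
          have : (2:ℕ)^(k+1+l) = 2*2^(k+l) := by
            have := phalf (a := k+1+l) (by omega)
            rwa [show k+1+l-1 = k+l from by omega] at this
          rw [this]; ring
        have e2 : 2^(k+1)*(2^l*p + 2*t+1) = 2*(2^k*(2^l*p + 2*t+1)) := by
          rw [pow_succ]; ring
        exact Or.inr (Or.inr ⟨k, l, p, t, hl, hp, ht, by omega, by omega⟩)
  · rintro (⟨k, p, hp, hx, hy⟩ | ⟨k, l, p, t, hl, hp, ht, hx, hy⟩ |
      ⟨k, l, p, t, hl, hp, ht, hx, hy⟩)
    · exact Or.inl ⟨k+1, p, hp, by rw [hx, pow_succ]; ring, by rw [hy, pow_succ]; ring⟩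
    · exact Or.inr (Or.inl ⟨k+1, l, p, t, hl, hp, ht, by rw [hx, pow_succ]; ring,
        by rw [hy, show k+1+l = (k+l)+1 from by omega, pow_succ]; ring⟩)
    · exact Or.inr (Or.inr ⟨k+1, l, p, t, hl, hp, ht,
        by rw [hx, show k+1+l = (k+l)+1 from by omega, pow_succ]; ring,
        by rw [hy, pow_succ]; ring⟩)

-- given odd s with 3 ≤ s, find l with 2 ≤ l, 2^(l-1) < s < 2^l
lemma find_l {s : ℕ} (hs : s % 2 = 1) (h3 : 3 ≤ s) :
    ∃ l, 2 ≤ l ∧ 2^(l-1) < s ∧ s < 2^l := by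
  refine ⟨Nat.log 2 s + 1, ?_, ?_, ?_⟩
  · have h2 : 1 ≤ Nat.log 2 s := by
      by_contra hc
      push_neg at hc
      have h0 : Nat.log 2 s = 0 := by omega
      have := Nat.lt_pow_succ_log_self (by norm_num : 1 < 2) s
      rw [h0] at this
      norm_num at this
      omega
    omega
  · have h1 : 2^(Nat.log 2 s) ≤ s := Nat.pow_log_le_self 2 (by omega)
    rcases Nat.eq_or_lt_of_le h1 with he | hlt
    · -- s a power of two, contradiction with oddness
      exfalso
      have hl1 : 1 ≤ Nat.log 2 s := by
        by_contra hc
        push_neg at hc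
        have h0 : Nat.log 2 s = 0 := by omega
        rw [h0] at he
        norm_num at he
        omega
      have : (2:ℕ)^(Nat.log 2 s) = 2*2^(Nat.log 2 s - 1) := phalf hl1
      omega
    · simpa using hlt
  · have := Nat.lt_pow_succ_log_self (by norm_num : 1 < 2) s
    simpa using this

lemma R_H2 (m p j : ℕ) (hp : 1 ≤ p) (h1 : 2^m < j) (h2 : j ≤ 2^(m+1)) :
    R (2^(m+1)*p + j) (2^(m+1)*p) := by
  rcases Nat.eq_or_lt_of_le h2 with he | hlt
  · rw [he]
    exact R_i' (m+1) p hp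
  · obtain ⟨k, s, hsodd, hjs⟩ := Nat.exists_eq_two_pow_mul_odd (show j ≠ 0 from by omega)
    have hs : s % 2 = 1 := Nat.odd_iff.mp hsodd
    have hs3 : 3 ≤ s := by
      by_contra hc
      push_neg at hc
      have hs1 : s = 1 := by omega
      rw [hs1, mul_one] at hjs
      subst hjs
      have hk1 : m < k := pexp_lt h1
      have hk2 : k < m+1 := pexp_lt hlt
      omega
    obtain ⟨l, hl2, hsl1, hsl2⟩ := find_l hs hs3
    have hkl : k + l ≤ m + 1 := by
      have hlt2 : (2:ℕ)^(k+(l-1)) < 2^(m+1) := by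
        calc (2:ℕ)^(k+(l-1)) = 2^k*2^(l-1) := pow_add 2 k (l-1)
        _ < 2^k*s := (Nat.mul_lt_mul_left (p2pos k)).mpr hsl1
        _ = j := hjs.symm
        _ < 2^(m+1) := hlt
      have := pexp_lt hlt2
      omega
    have ey : 2^(m+1)*p = 2^(k+l)*(2^(m+1-(k+l))*p) := by
      rw [← mul_assoc, ← pow_add]
      congr 2
      omega
    rw [ey, hjs]
    exact R_ii' k l (2^(m+1-(k+l))*p) s hl2
      (Nat.mul_pos (p2pos _) hp) hsl1 hsl2 hs

lemma R_H (m p j : ℕ) (hp : 1 ≤ p) (hj1 : 1 ≤ j) (hj2 : j ≤ 2^m) :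
    R (2^(m+1)*(p+1)) (2^(m+1)*p + j) := by
  rcases Nat.eq_or_lt_of_le hj2 with he | hlt
  · -- j = 2^m : family i with k = m, P = 2p+1
    subst he
    have e1 : 2^(m+1)*(p+1) = 2^m*(2*p+1) + 2^m := by
      rw [pow_succ]; ring
    have e2 : 2^(m+1)*p + 2^m = 2^m*(2*p+1) := by
      rw [pow_succ]; ring
    rw [e1, e2]
    exact R_i' m (2*p+1) (by omega)
  · obtain ⟨k, s, hsodd, hjs⟩ := Nat.exists_eq_two_pow_mul_odd (show j ≠ 0 from by omega)
    have hs : s % 2 = 1 := Nat.odd_iff.mp hsodd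
    have hkm : k < m := by
      have : (2:ℕ)^k ≤ j := by
        rw [hjs]
        exact Nat.le_mul_of_pos_right _ (by omega)
      exact pexp_lt (lt_of_le_of_lt this hlt)
    have hslt : s < 2^(m-k) := by
      have e : (2:ℕ)^m = 2^k*2^(m-k) := by rw [← pow_add]; congr 1; omega
      rw [hjs, e] at hlt
      exact Nat.lt_of_mul_lt_mul_left hlt
    have hL : 2 ≤ m+1-k := by omega
    have e3 : (2:ℕ)^(m+1-k-1) = 2^(m-k) := by congr 1; omega
    have e4 : k + (m+1-k) = m+1 := by omega
    have := R_iii' k (m+1-k) p s hL hp (by rw [e3]; exact hslt) hs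
    rw [e4] at this
    rw [hjs]
    exact this

lemma R4a (a b : ℕ) (hb : 1 ≤ b) (hab : b+1 ≤ a) :
    R (2*a) (2*b+1) ↔
      (a = b+1 ∨ ∃ m, 2^m < a-b ∧ a-b ≤ 2^(m+1) ∧ 2^(m+1) ∣ a ∧ 2^(m+2) ≤ a) := by
  constructor
  · rintro (⟨k, p, hp, hx, hy⟩ | ⟨k, l, p, t, hl, hp, ht, hx, hy⟩ |
      ⟨k, l, p, t, hl, hp, ht, hx, hy⟩)
    · match k with
      | 0 => simp only [pow_zero, one_mul] at hx hy; left; omega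
      | k+1 =>
        have e : 2^(k+1)*p = 2*(2^k*p) := by rw [pow_succ]; ring
        omega
    · have e : 2^(k+l)*p = 2*(2^(k+l-1)*p) := by
        rw [phalf (show 1 ≤ k+l from by omega)]; ring
      omega
    · match k with
      | 0 =>
        simp only [Nat.zero_add] at hx
        simp only [pow_zero, one_mul] at hy
        right
        have eh : (2:ℕ)^l = 2*2^(l-1) := phalf (by omega)
        have eh2 : (2:ℕ)^(l-1) = 2*2^(l-2) := by
          have := phalf (a := l-1) (by omega)
          rwa [show l-1-1 = l-2 from by omega] at this
        have eX : (2:ℕ)^l*(p+1) = 2^l*p + 2^l := by ring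
        have eYp : (2:ℕ)^l*p = 2*(2^(l-1)*p) := by rw [eh]; ring
        have eX1 : (2:ℕ)^(l-1)*(p+1) = 2^(l-1)*p + 2^(l-1) := by ring
        have haeq : a = 2^(l-1)*(p+1) := by omega
        have hbeq : b = 2^(l-1)*p + t := by omega
        have hyle : (2:ℕ)^(l-1) ≤ 2^(l-1)*p := Nat.le_mul_of_pos_right _ hp
        refine ⟨l-2, ?_, ?_, ?_, ?_⟩
        · omega
        · have e5 : (2:ℕ)^(l-2+1) = 2^(l-1) := by congr 1; omega
          omega
        · rw [show l-2+1 = l-1 from by omega]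
          exact ⟨p+1, haeq⟩
        · have e6 : (2:ℕ)^(l-2+2) = 2^l := by congr 1; omega
          omega
      | k+1 =>
        have e : 2^(k+1)*(2^l*p+2*t+1) = 2*(2^k*(2^l*p+2*t+1)) := by
          rw [pow_succ]; ring
        omega
  · rintro (h | ⟨m, g1, g2, g3, g4⟩)
    · exact Or.inl ⟨0, 2*b+1, by omega, by simp only [pow_zero, one_mul]; omega,
        by simp only [pow_zero, one_mul]⟩
    · obtain ⟨P, hP⟩ := g3
      have e8 : (2:ℕ)^(m+2) = 2*2^(m+1) := by rw [pow_succ]; ring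
      have hge2 : 2 ≤ P := by
        have h1 : 2^(m+1)*2 ≤ 2^(m+1)*P := by omega
        exact Nat.le_of_mul_le_mul_left h1 (p2pos (m+1))
      have e10 : 2^(m+1)*P = 2^(m+1)*(P-1) + 2^(m+1) := by
        conv_lhs => rw [show P = (P-1)+1 from by omega]
        rw [Nat.mul_add, mul_one]
      have e9 : 2^(m+2)*(P-1) = 2*(2^(m+1)*(P-1)) := by rw [pow_succ]; ring
      refine Or.inr (Or.inr ⟨0, m+2, P-1, 2^(m+1) - (a-b), by omega, by omega, ?_, ?_, ?_⟩)
      · have e7 : (2:ℕ)^(m+2-2) = 2^m := by congr 1 <;> omega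
        omega
      · have e11 : 2^(0+(m+2))*(P-1+1) = 2*(2^(m+1)*P) := by
          rw [show P-1+1 = P from by omega, Nat.zero_add, pow_succ]; ring
        omega
      · simp only [pow_zero, one_mul]
        omega

lemma R5a (a b : ℕ) (hb : 1 ≤ b) (hab : b ≤ a) :
    R (2*a+1) (2*b) ↔
      (a = b ∨ ∃ m, 2^m < a+1-b ∧ a+1-b ≤ 2^(m+1) ∧ 2^(m+1) ∣ b) := by
  constructor
  · rintro (⟨k, p, hp, hx, hy⟩ | ⟨k, l, p, t, hl, hp, ht, hx, hy⟩ |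
      ⟨k, l, p, t, hl, hp, ht, hx, hy⟩)
    · match k with
      | 0 => simp only [pow_zero, one_mul] at hx hy; left; omega
      | k+1 =>
        have e : 2^(k+1)*(p+1) = 2*(2^k*(p+1)) := by rw [pow_succ]; ring
        omega
    · match k with
      | 0 =>
        obtain ⟨key, hZ0, hZ1, hZ2⟩ := fam2_facts 0 l p t hl ht
        simp only [pow_zero, one_mul, Nat.zero_add] at key hZ0 hZ1 hZ2 hx hy
        right
        have eh2 : (2:ℕ)^(l-1) = 2*2^(l-2) := by
          have := phalf (a := l-1) (by omega)
          rwa [show l-1-1 = l-2 from by omega] at this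
        have eYp : (2:ℕ)^l*p = 2*(2^(l-1)*p) := by rw [hZ2]; ring
        have hbeq : b = 2^(l-1)*p := by omega
        refine ⟨l-2, ?_, ?_, ?_⟩
        · omega
        · have e5 : (2:ℕ)^(l-2+1) = 2^(l-1) := by congr 1; omega
          omega
        · rw [show l-2+1 = l-1 from by omega]
          exact ⟨p, hbeq⟩
      | k+1 =>
        have e : 2^(k+1)*(2^l*(p+1) - (2*t+1)) = 2*(2^k*(2^l*(p+1) - (2*t+1))) := by
          rw [pow_succ]; ring
        omega
    · have e : 2^(k+l)*(p+1) = 2*(2^(k+l-1)*(p+1)) := by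
        rw [phalf (show 1 ≤ k+l from by omega)]; ring
      omega
  · rintro (h | ⟨m, g1, g2, g3⟩)
    · exact Or.inl ⟨0, 2*b, by omega, by simp only [pow_zero, one_mul]; omega,
        by simp only [pow_zero, one_mul]⟩
    · obtain ⟨P, hP⟩ := g3
      have hp1 : 1 ≤ P := by
        rcases Nat.eq_zero_or_pos P with h0 | h1
        · rw [h0, mul_zero] at hP; omega
        · exact h1
      have e9 : 2^(m+2)*(P+1) = 2*(2^(m+1)*(P+1)) := by rw [pow_succ]; ring
      have e10 : 2^(m+1)*(P+1) = 2^(m+1)*P + 2^(m+1) := by ring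
      refine Or.inr (Or.inl ⟨0, m+2, P, 2^(m+1) - (a+1-b), by omega, hp1, ?_, ?_, ?_⟩)
      · have e7 : (2:ℕ)^(m+2-2) = 2^m := by congr 1 <;> omega
        omega
      · simp only [pow_zero, one_mul]
        omega
      · have e11 : (2:ℕ)^(0+(m+2)) = 2*2^(m+1) := by rw [Nat.zero_add, pow_succ]; ring
        have e12 : 2^(0+(m+2))*P = 2*(2^(m+1)*P) := by rw [e11]; ring
        omega

lemma C1 (a b k l p t : ℕ) (hl : 2 ≤ l) (hp : 1 ≤ p) (ht : t < 2^(l-2))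
    (hx : a = 2^k*(2^l*(p+1) - (2*t+1))) (hy : b = 2^(k+l)*p) (hR : R a (b+1)) : False := by
  obtain ⟨key, hZ0, hZ1, hZ2⟩ := fam2_facts k l p t hl ht
  rw [← hx] at key
  have hY : (2:ℕ)^(k+l) ≤ 2^(k+l)*p := Nat.le_mul_of_pos_right _ hp
  have hP2 : (2:ℕ) ≤ 2^(k+l-1) := by
    have : (2:ℕ)^1 ≤ 2^(k+l-1) := pexp_le (by omega)
    simpa using this
  have eY2 : 2^(k+l)*p = 2*(2^(k+l-1)*p) := by rw [hZ2]; ring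
  rcases hR with (⟨k₂, p₂, hp₂, hx₂, hy₂⟩ | ⟨k₂, l₂, p₂, t₂, hl₂, hp₂, ht₂, hx₂, hy₂⟩ |
      ⟨k₂, l₂, p₂, t₂, hl₂, hp₂, ht₂, hx₂, hy₂⟩)
  · match k₂ with
    | 0 => simp only [pow_zero, one_mul] at hx₂ hy₂; omega
    | k₂+1 =>
      have e : 2^(k₂+1)*p₂ = 2*(2^k₂*p₂) := by rw [pow_succ]; ring
      omega
  · have e : 2^(k₂+l₂)*p₂ = 2*(2^(k₂+l₂-1)*p₂) := by
      rw [phalf (show 1 ≤ k₂+l₂ from by omega)]; ring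
    omega
  · match k₂ with
    | 0 =>
      simp only [Nat.zero_add] at hx₂
      simp only [pow_zero, one_mul] at hy₂
      obtain ⟨key₂, hZ0₂, hZ1₂, hZ2₂⟩ := fam3_facts 0 l₂ p₂ t₂ hl₂ ht₂
      simp only [pow_zero, one_mul, Nat.zero_add] at key₂ hZ0₂ hZ1₂ hZ2₂
      have eX₂ : (2:ℕ)^l₂*(p₂+1) = 2^l₂*p₂ + 2^l₂ := by ring
      have hc1 : (2:ℕ)^(l₂-1) < 2^(k+l) := by omega
      have hc2 : (2:ℕ)^(k+l-1) < 2^l₂ := by omega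
      have hll : l₂ = k+l := by
        have := pexp_lt hc1
        have := pexp_lt hc2
        omega
      rw [hll] at hx₂
      have hd : (2:ℕ)^(k+l) ∣ a - b := Nat.dvd_sub ⟨p₂+1, hx₂⟩ ⟨p, hy⟩
      obtain ⟨q, hq⟩ := hd
      rcases Nat.eq_zero_or_pos q with h0 | h1
      · rw [h0, mul_zero] at hq; omega
      · have : (2:ℕ)^(k+l) ≤ 2^(k+l)*q := Nat.le_mul_of_pos_right _ h1
        omega
    | k₂+1 =>
      have e : 2^(k₂+1)*(2^l₂*p₂+2*t₂+1) = 2*(2^k₂*(2^l₂*p₂+2*t₂+1)) := by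
        rw [pow_succ]; ring
      omega

lemma C2 (a b k l p t : ℕ) (hl : 2 ≤ l) (hp : 1 ≤ p) (ht : t < 2^(l-2))
    (hx : a+1 = 2^(k+l)*(p+1)) (hy : b = 2^k*(2^l*p + 2*t+1)) (hab : b < a)
    (hR : R a b) : False := by
  obtain ⟨key, hZ0, hZ1, hZ2⟩ := fam3_facts k l p t hl ht
  rw [← hy] at key
  have eA : (2:ℕ)^(k+l)*(p+1) = 2^(k+l)*p + 2^(k+l) := by ring
  have hP2 : (2:ℕ) ≤ 2^(k+l-1) := by
    have : (2:ℕ)^1 ≤ 2^(k+l-1) := pexp_le (by omega)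
    simpa using this
  have hUodd : (2^l*p + 2*t+1) % 2 = 1 := by
    have eU : (2:ℕ)^l*p = 2*(2^(l-1)*p) := by
      rw [phalf (show 1 ≤ l from by omega)]; ring
    omega
  rcases hR with (⟨k₂, p₂, hp₂, hx₂, hy₂⟩ | ⟨k₂, l₂, p₂, t₂, hl₂, hp₂, ht₂, hx₂, hy₂⟩ |
      ⟨k₂, l₂, p₂, t₂, hl₂, hp₂, ht₂, hx₂, hy₂⟩)
  · have e₂ : 2^k₂*(p₂+1) = 2^k₂*p₂ + 2^k₂ := by ring
    have hk₂ : k₂ ≤ k := dvd_odd_part hy hUodd ⟨p₂, hy₂⟩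
    have h1 : (2:ℕ)^k₂ ≤ 2^k := pexp_le hk₂
    have h2 : (2:ℕ)^k < 2^(k+l-1) :=
      (Nat.pow_lt_pow_iff_right (by norm_num)).mpr (by omega)
    omega
  · obtain ⟨key₂, hZ0₂, hZ1₂, hZ2₂⟩ := fam2_facts k₂ l₂ p₂ t₂ hl₂ ht₂
    rw [← hx₂] at key₂
    have hk₂ : k₂ + l₂ ≤ k := dvd_odd_part hy hUodd ⟨p₂, hy₂⟩
    have h1 : (2:ℕ)^(k₂+l₂) ≤ 2^k := pexp_le hk₂
    have h2 : (2:ℕ)^k < 2^(k+l-1) :=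
      (Nat.pow_lt_pow_iff_right (by norm_num)).mpr (by omega)
    omega
  · obtain ⟨key₂, hZ0₂, hZ1₂, hZ2₂⟩ := fam3_facts k₂ l₂ p₂ t₂ hl₂ ht₂
    rw [← hy₂] at key₂
    have eA₂ : (2:ℕ)^(k₂+l₂)*(p₂+1) = 2^(k₂+l₂)*p₂ + 2^(k₂+l₂) := by ring
    have eY : 2^(k+l)*p = 2*(2^(k+l-1)*p) := by rw [hZ2]; ring
    have eY₂ : 2^(k₂+l₂)*p₂ = 2*(2^(k₂+l₂-1)*p₂) := by rw [hZ2₂]; ring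
    omega

lemma R4b (a b m : ℕ) (hb : 1 ≤ b) (hab : b+1 < a) (g1 : 2^m < a-b)
    (g2 : a-b ≤ 2^(m+1)) (g3 : 2^(m+1) ∣ a) (g4 : 2^(m+2) ≤ a) :
    R a (b+1) ∧ R a b := by
  obtain ⟨P, hP⟩ := g3
  have e8 : (2:ℕ)^(m+2) = 2*2^(m+1) := by rw [pow_succ]; ring
  have hge2 : 2 ≤ P := by
    have h1 : 2^(m+1)*2 ≤ 2^(m+1)*P := by omega
    exact Nat.le_of_mul_le_mul_left h1 (p2pos (m+1))
  have e10 : 2^(m+1)*P = 2^(m+1)*(P-1) + 2^(m+1) := by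
    conv_lhs => rw [show P = (P-1)+1 from by omega]
    rw [Nat.mul_add, mul_one]
  have e12 : 2^(m+1)*(P-1+1) = 2^(m+1)*P := by rw [show P-1+1 = P from by omega]
  constructor
  · -- R a (b+1) : j+1 where j = 2^(m+1) - (a-b) < 2^m
    have hRH := R_H m (P-1) (2^(m+1) - (a-b) + 1) (by omega) (by omega) (by omega)
    rw [e12] at hRH
    rw [show a = 2^(m+1)*P from by omega,
      show b+1 = 2^(m+1)*(P-1) + (2^(m+1) - (a-b) + 1) from by omega]
    exact hRH
  · rcases Nat.eq_or_lt_of_le g2 with he | hlt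
    · -- a - b = 2^(m+1), i.e. j = 0 : family i
      rw [show a = 2^(m+1)*(P-1) + 2^(m+1) from by omega,
        show b = 2^(m+1)*(P-1) from by omega]
      exact R_i' (m+1) (P-1) (by omega)
    · have hRH := R_H m (P-1) (2^(m+1) - (a-b)) (by omega) (by omega) (by omega)
      rw [e12] at hRH
      rw [show a = 2^(m+1)*P from by omega,
        show b = 2^(m+1)*(P-1) + (2^(m+1) - (a-b)) from by omega]
      exact hRH

lemma R4c (a b : ℕ) (hb : 1 ≤ b) (hab : b+1 < a) (h1 : R a (b+1)) (h2 : R a b) :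
    ∃ m, 2^m < a-b ∧ a-b ≤ 2^(m+1) ∧ 2^(m+1) ∣ a ∧ 2^(m+2) ≤ a := by
  rcases h2 with (⟨k, p, hp, hx, hy⟩ | ⟨k, l, p, t, hl, hp, ht, hx, hy⟩ |
      ⟨k, l, p, t, hl, hp, ht, hx, hy⟩)
  · have e : 2^k*(p+1) = 2^k*p + 2^k := by ring
    match k with
    | 0 => simp only [pow_zero, one_mul] at hx hy; omega
    | k+1 =>
      have e2 : (2:ℕ)^(k+1) = 2*2^k := by rw [pow_succ]; ring
      have e3 : (2:ℕ)^(k+2) = 2*2^(k+1) := by rw [pow_succ]; ring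
      have hplow : (2:ℕ)^(k+1) ≤ 2^(k+1)*p := Nat.le_mul_of_pos_right _ hp
      exact ⟨k, by omega, by omega, ⟨p+1, hx⟩, by omega⟩
  · exact (C1 a b k l p t hl hp ht hx hy h1).elim
  · obtain ⟨key, hZ0, hZ1, hZ2⟩ := fam3_facts k l p t hl ht
    rw [← hy] at key
    have eA : (2:ℕ)^(k+l)*(p+1) = 2^(k+l)*p + 2^(k+l) := by ring
    have hY : (2:ℕ)^(k+l) ≤ 2^(k+l)*p := Nat.le_mul_of_pos_right _ hp
    have e4 : (2:ℕ)^(k+l+1) = 2*2^(k+l) := by rw [pow_succ]; ring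
    refine ⟨k+l-1, ?_, ?_, ?_, ?_⟩
    · omega
    · rw [show k+l-1+1 = k+l from by omega]
      omega
    · rw [show k+l-1+1 = k+l from by omega]
      exact ⟨p+1, hx⟩
    · rw [show k+l-1+2 = k+l+1 from by omega]
      omega

lemma R5b (a b m : ℕ) (hb : 1 ≤ b) (hab : b < a) (g1 : 2^m < a+1-b)
    (g2 : a+1-b ≤ 2^(m+1)) (g3 : 2^(m+1) ∣ b) : R (a+1) b ∧ R a b := by
  obtain ⟨P, hP⟩ := g3
  have hp1 : 1 ≤ P := by
    rcases Nat.eq_zero_or_pos P with h0 | h1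
    · rw [h0, mul_zero] at hP; omega
    · exact h1
  constructor
  · have hRH := R_H2 m P (a+1-b) hp1 g1 g2
    rw [show 2^(m+1)*P + (a+1-b) = a+1 from by omega, ← hP] at hRH
    exact hRH
  · rcases Nat.eq_or_lt_of_le g1 with he | hlt
    · -- a - b = 2^m : family i with k = m, P' = 2P
      have e : 2^m*(2*P) = 2^(m+1)*P := by rw [pow_succ]; ring
      rw [show a = 2^m*(2*P) + 2^m from by omega, show b = 2^m*(2*P) from by omega]
      exact R_i' m (2*P) (by omega)
    · have hRH := R_H2 m P (a-b) hp1 (by omega) (by omega)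
      rw [show 2^(m+1)*P + (a-b) = a from by omega, ← hP] at hRH
      exact hRH

lemma R5c (a b : ℕ) (hb : 1 ≤ b) (hab : b < a) (h1 : R (a+1) b) (h2 : R a b) :
    ∃ m, 2^m < a+1-b ∧ a+1-b ≤ 2^(m+1) ∧ 2^(m+1) ∣ b := by
  rcases h1 with (⟨k, p, hp, hx, hy⟩ | ⟨k, l, p, t, hl, hp, ht, hx, hy⟩ |
      ⟨k, l, p, t, hl, hp, ht, hx, hy⟩)
  · have e : 2^k*(p+1) = 2^k*p + 2^k := by ring
    match k with
    | 0 => simp only [pow_zero, one_mul] at hx hy; omega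
    | k+1 =>
      have e2 : (2:ℕ)^(k+1) = 2*2^k := by rw [pow_succ]; ring
      exact ⟨k, by omega, by omega, ⟨p, hy⟩⟩
  · obtain ⟨key, hZ0, hZ1, hZ2⟩ := fam2_facts k l p t hl ht
    rw [← hx] at key
    refine ⟨k+l-1, ?_, ?_, ?_⟩
    · omega
    · rw [show k+l-1+1 = k+l from by omega]
      omega
    · rw [show k+l-1+1 = k+l from by omega]
      exact ⟨p, hy⟩
  · exact (C2 a b k l p t hl hp ht hx hy hab h2).elim

lemma main_lemma : ∀ n x y : ℕ, x + y ≤ n → 1 ≤ y → y < x →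
    (c x + c y + (x - y) = c (x + y) ↔ R x y) := by
  intro n
  induction n with
  | zero => intro x y h hy hyx; exact absurd h (by omega)
  | succ n IH =>
    intro x y hsum hy hyx
    rcases Nat.even_or_odd x with ⟨a, hax'⟩ | ⟨a, hax⟩ <;>
      rcases Nat.even_or_odd y with ⟨b, hby'⟩ | ⟨b, hby⟩
    · -- even, even
      have hax : x = 2*a := by omega
      have hby : y = 2*b := by omega
      subst hax; subst hby
      have hb : 1 ≤ b := by omega
      have hba : b < a := by omega
      have e1 : c (2*a) = 2*c a := c_even a
      have e2 : c (2*b) = 2*c b := c_even b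
      have e3 : c (2*a + 2*b) = 2*c (a+b) := by
        rw [show 2*a+2*b = 2*(a+b) from by ring, c_even]
      have hIH := IH a b (by omega) hb hba
      rw [R1 a b]
      constructor
      · intro hE; exact hIH.mp (by omega)
      · intro hR; have := hIH.mpr hR; omega
    · -- even, odd
      have hax : x = 2*a := by omega
      subst hax; subst hby
      rcases Nat.eq_zero_or_pos b with rfl | hb
      · -- y = 1
        simp only [Nat.mul_zero, Nat.zero_add]
        have ha : 1 ≤ a := by omega
        have e1 : c (2*a) = 2*c a := c_even a
        have e3 : c (2*a + 1) = c (a+1) + c a + 1 := c_odd a ha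
        have v1 : c 1 = 0 := c_one
        have hcs := c_succ a ha
        rw [R3 a ha]
        constructor
        · intro hE; omega
        · intro h1
          have e4 : c (a+1) = 2 * c 1 := by
            rw [show a+1 = 2*1 from by omega]; exact c_even 1
          have e5 : c a = c 1 := by rw [h1]
          omega
      · -- y = 2b+1, b ≥ 1
        have ha1 : b+1 ≤ a := by omega
        have e1 : c (2*a) = 2*c a := c_even a
        have e2 : c (2*b+1) = c (b+1) + c b + 1 := c_odd b hb
        have e3 : c (2*a + (2*b+1)) = c (a+b+1) + c (a+b) + 1 := by
          rw [show 2*a + (2*b+1) = 2*(a+b)+1 from by ring, c_odd (a+b) (by omega)]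
        have I1 : c (a+b+1) ≤ c a + c (b+1) + (a - (b+1)) := by
          have := c_add_le (a+b+1) a (b+1) (by omega) (by omega)
          rwa [show a+(b+1) = a+b+1 from by ring] at this
        have I2 : c (a+b) ≤ c a + c b + (a-b) := c_add_le (a+b) a b (le_refl _) (by omega)
        have hIH2 := IH a b (by omega) hb (by omega)
        have Q1 : (c a + c (b+1) + (a-(b+1)) = c (a+b+1)) ↔ (a = b+1 ∨ R a (b+1)) := by
          rcases Nat.eq_or_lt_of_le ha1 with he | hlt
          · constructor
            · intro _; exact Or.inl he.symm
            · intro _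
              have e' : c (a+b+1) = 2 * c (b+1) := by
                rw [show a+b+1 = 2*(b+1) from by omega, c_even]
              have e'' : c a = c (b+1) := by rw [← he]
              omega
          · have hIH1 := IH a (b+1) (by omega) (by omega) hlt
            rw [show a+(b+1) = a+b+1 from by ring] at hIH1
            constructor
            · intro h; exact Or.inr (hIH1.mp h)
            · rintro (he | hR)
              · exact absurd he (by omega)
              · exact hIH1.mpr hR
        rw [R4a a b hb ha1]
        constructor
        · intro hE
          have h2 : c a + c b + (a-b) = c (a+b) := by omega
          have h1 : c a + c (b+1) + (a-(b+1)) = c (a+b+1) := by omega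
          have hRb := hIH2.mp h2
          rcases Nat.eq_or_lt_of_le ha1 with he | hlt
          · exact Or.inl he.symm
          · have hR1 : R a (b+1) := by
              rcases Q1.mp h1 with he2 | h
              · exact absurd he2 (by omega)
              · exact h
            exact Or.inr (R4c a b hb hlt hR1 hRb)
        · rintro (he | ⟨m, g1, g2, g3, g4⟩)
          · have hRab : R a b := by
              rw [he]
              have := R_i' 0 b hb
              simpa using this
            have h2 := hIH2.mpr hRab
            have h1 := Q1.mpr (Or.inl he)
            omega
          · have hlt : b+1 < a := by have := p2pos m; omega
            obtain ⟨hR1, hR2⟩ := R4b a b m hb hlt g1 g2 g3 g4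
            have h1 := Q1.mpr (Or.inr hR1)
            have h2 := hIH2.mpr hR2
            omega
    · -- odd, even
      have hby : y = 2*b := by omega
      subst hax; subst hby
      have hb : 1 ≤ b := by omega
      have hba : b ≤ a := by omega
      have ha : 1 ≤ a := by omega
      have e1 : c (2*a+1) = c (a+1) + c a + 1 := c_odd a ha
      have e2 : c (2*b) = 2*c b := c_even b
      have e3 : c (2*a+1 + 2*b) = c (a+b+1) + c (a+b) + 1 := by
        rw [show 2*a+1+2*b = 2*(a+b)+1 from by ring, c_odd (a+b) (by omega)]
      have I1 : c (a+b+1) ≤ c (a+1) + c b + (a+1-b) := by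
        have := c_add_le (a+b+1) (a+1) b (by omega) (by omega)
        rwa [show a+1+b = a+b+1 from by ring] at this
      have I2 : c (a+b) ≤ c a + c b + (a-b) := c_add_le (a+b) a b (le_refl _) hba
      have hIH1 := IH (a+1) b (by omega) hb (by omega)
      rw [show a+1+b = a+b+1 from by ring] at hIH1
      have Q2 : (c a + c b + (a-b) = c (a+b)) ↔ (a = b ∨ R a b) := by
        rcases Nat.eq_or_lt_of_le hba with he | hlt
        · constructor
          · intro _; exact Or.inl he.symm
          · intro _
            have e' : c (a+b) = 2 * c a := by
              rw [show a+b = 2*a from by omega, c_even]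
            have e'' : c b = c a := by rw [he]
            omega
        · have hIH2 := IH a b (by omega) hb hlt
          constructor
          · intro h; exact Or.inr (hIH2.mp h)
          · rintro (he | hR)
            · exact absurd he (by omega)
            · exact hIH2.mpr hR
      rw [R5a a b hb hba]
      constructor
      · intro hE
        have h1 : c (a+1) + c b + (a+1-b) = c (a+b+1) := by omega
        have h2 : c a + c b + (a-b) = c (a+b) := by omega
        have hR1 := hIH1.mp h1
        rcases Nat.eq_or_lt_of_le hba with he | hlt
        · exact Or.inl he.symm
        · have hR2 : R a b := by
            rcases Q2.mp h2 with he2 | h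
            · exact absurd he2 (by omega)
            · exact h
          exact Or.inr (R5c a b hb hlt hR1 hR2)
      · rintro (he | ⟨m, g1, g2, g3⟩)
        · have hR1 : R (a+1) b := by
            rw [he]
            have := R_i' 0 b hb
            simpa using this
          have h1 := hIH1.mpr hR1
          have h2 := Q2.mpr (Or.inl he)
          omega
        · have hlt : b < a := by have := p2pos m; omega
          obtain ⟨hR1, hR2⟩ := R5b a b m hb hlt g1 g2 g3
          have h1 := hIH1.mpr hR1
          have h2 := Q2.mpr (Or.inr hR2)
          omega
    · -- odd, odd
      subst hax; subst hby
      rcases Nat.eq_zero_or_pos b with rfl | hb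
      · -- y = 1
        simp only [Nat.mul_zero, Nat.zero_add]
        have ha : 1 ≤ a := by omega
        have e1 : c (2*a+1) = c (a+1) + c a + 1 := c_odd a ha
        have e3 : c (2*a+1 + 1) = 2*c (a+1) := by
          rw [show 2*a+1+1 = 2*(a+1) from by ring, c_even]
        have v1 : c 1 = 0 := c_one
        have hcs := c_succ a ha
        constructor
        · intro hE; exact absurd hE (by omega)
        · intro hR
          have := R2 a 0
          simp only [Nat.mul_zero, Nat.zero_add] at this
          exact (this hR).elim
      · -- b ≥ 1
        have hba : b + 1 ≤ a := by omega
        have e1 : c (2*a+1) = c (a+1) + c a + 1 := c_odd a (by omega)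
        have e2 : c (2*b+1) = c (b+1) + c b + 1 := c_odd b hb
        have e3 : c (2*a+1 + (2*b+1)) = 2 * c (a+b+1) := by
          rw [show 2*a+1+(2*b+1) = 2*(a+b+1) from by ring, c_even]
        have I1 : c (a+b+1) ≤ c (a+1) + c b + (a+1-b) := by
          have := c_add_le (a+b+1) (a+1) b (by omega) (by omega)
          rwa [show a+1+b = a+b+1 from by ring] at this
        have I2 : c (a+b+1) ≤ c a + c (b+1) + (a-(b+1)) := by
          have := c_add_le (a+b+1) a (b+1) (by omega) (by omega)
          rwa [show a+(b+1) = a+b+1 from by ring] at this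
        constructor
        · intro hE; exact absurd hE (by omega)
        · intro hR; exact (R2 a b hR).elim

/-- Characterization of the pairs `(n₁, n₂)` with `n₁ > n₂ ≥ 1` such that
`c n₁ + c n₂ + (n₁ - n₂) = c (n₁ + n₂)`. -/
theorem c_eq_iff_three_cases (n₁ n₂ : ℕ) (h2 : 1 ≤ n₂) (h12 : n₂ < n₁) :
    c n₁ + c n₂ + (n₁ - n₂) = c (n₁ + n₂) ↔
      ((∃ k p : ℕ, 1 ≤ p ∧ n₁ = 2 ^ k * (p + 1) ∧ n₂ = 2 ^ k * p) ∨
       (∃ k l p t : ℕ, 2 ≤ l ∧ 1 ≤ p ∧ t < 2 ^ (l - 2) ∧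
          n₁ = 2 ^ k * (2 ^ l * (p + 1) - (2 * t + 1)) ∧ n₂ = 2 ^ (k + l) * p) ∨
       (∃ k l p t : ℕ, 2 ≤ l ∧ 1 ≤ p ∧ t < 2 ^ (l - 2) ∧
          n₁ = 2 ^ (k + l) * (p + 1) ∧ n₂ = 2 ^ k * (2 ^ l * p + 2 * t + 1))) :=
  main_lemma (n₁ + n₂) n₁ n₂ (le_refl _) h2 h12
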